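/- arXiv:1810.07717 — 5 statements merged into one kernel-verified Lean document; each statement's English description precedes it below -/
import Mathlib

section
/- Let X be an n×n matrix with nonnegative real entries and r, c vectors in the n-dimensional probability simplex with X𝟙 ≤ r and Xᵀ𝟙 ≤ c entrywise. Define e_r = r − X𝟙, e_c = c − Xᵀ𝟙, and D = (1/‖e_c‖₁)·e_r e_cᵀ if ‖e_c‖₁ ≠ 0 and D = 0 otherwise. Then Y = X + D is entrywise nonnegative and satisfies Y𝟙 = r and Yᵀ𝟙 = c. -/
open Finset Real

theorem stmt_1 {n : ℕ} (X : Matrix (Fin n) (Fin n) ℝ) (r c : Fin n → ℝ)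
    (hX : ∀ i j, 0 ≤ X i j)
    (hr0 : ∀ i, 0 ≤ r i) (hr1 : ∑ i, r i = 1)
    (hc0 : ∀ j, 0 ≤ c j) (hc1 : ∑ j, c j = 1)
    (hrow : ∀ i, ∑ j, X i j ≤ r i) (hcol : ∀ j, ∑ i, X i j ≤ c j)
    (er ec : Fin n → ℝ)
    (her : ∀ i, er i = r i - ∑ j, X i j)
    (hec : ∀ j, ec j = c j - ∑ i, X i j)
    (D : Matrix (Fin n) (Fin n) ℝ)
    (hD : ∀ i j, D i j = if (∑ k, |ec k|) ≠ 0 then er i * ec j / (∑ k, |ec k|) else 0)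
    (Y : Matrix (Fin n) (Fin n) ℝ) (hY : Y = X + D) :
    (∀ i j, 0 ≤ Y i j) ∧ (∀ i, ∑ j, Y i j = r i) ∧ (∀ j, ∑ i, Y i j = c j) := by
  have her0 : ∀ i, 0 ≤ er i := fun i => by rw [her]; linarith [hrow i]
  have hec0 : ∀ j, 0 ≤ ec j := fun j => by rw [hec]; linarith [hcol j]
  have hs : ∑ k, |ec k| = ∑ k, ec k := by
    exact Finset.sum_congr rfl fun k _ => abs_of_nonneg (hec0 k)
  have hsum : ∑ k, ec k = ∑ k, er k := by
    simp only [her, hec, Finset.sum_sub_distrib]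
    rw [hr1, hc1, Finset.sum_comm]
  by_cases h : (∑ k, |ec k|) = 0
  · have hecz : ∀ j, ec j = 0 := fun j =>
      (Finset.sum_eq_zero_iff_of_nonneg (fun k _ => hec0 k)).mp (hs ▸ h) j (mem_univ j)
    have herz : ∀ i, er i = 0 := by
      have h0 : ∑ k, er k = 0 := by rw [← hsum]; simp [hecz]
      exact fun i =>
        (Finset.sum_eq_zero_iff_of_nonneg (fun k _ => her0 k)).mp h0 i (mem_univ i)
    have hD0 : ∀ i j, D i j = 0 := fun i j => by rw [hD]; simp [h]
    refine ⟨fun i j => ?_, fun i => ?_, fun j => ?_⟩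
    · rw [hY]; simpa [Matrix.add_apply, hD0] using hX i j
    · rw [hY]; simp only [Matrix.add_apply, hD0, add_zero]
      have := her i; have := herz i; linarith
    · rw [hY]; simp only [Matrix.add_apply, hD0, add_zero]
      have := hec j; have := hecz j; linarith
  · have hD' : ∀ i j, D i j = er i * ec j / (∑ k, |ec k|) := fun i j => by
      rw [hD]; simp [h]
    have hspos : 0 < ∑ k, |ec k| := by
      rcases lt_or_eq_of_le (Finset.sum_nonneg fun k _ => abs_nonneg (ec k)) with h1 | h1
      · exact h1
      · exact absurd h1.symm h
    refine ⟨fun i j => ?_, fun i => ?_, fun j => ?_⟩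
    · rw [hY]; simp only [Matrix.add_apply, hD']
      have : 0 ≤ er i * ec j / (∑ k, |ec k|) :=
        div_nonneg (mul_nonneg (her0 i) (hec0 j)) hspos.le
      linarith [hX i j]
    · rw [hY]; simp only [Matrix.add_apply, hD']
      rw [Finset.sum_add_distrib, ← Finset.sum_div, ← Finset.mul_sum, ← hs,
        mul_div_assoc, div_self h, mul_one]
      have := her i; linarith
    · rw [hY]; simp only [Matrix.add_apply, hD']
      rw [Finset.sum_add_distrib, ← Finset.sum_div]
      have : ∑ i, er i * ec j = (∑ k, |ec k|) * ec j := by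
        rw [← Finset.sum_mul, hs, hsum]
      rw [this, mul_comm, mul_div_assoc, div_self h, mul_one]
      have := hec j; linarith
end

section
/- Let r, c ∈ Δⁿ, sets S_r, S_c ⊆ [n] with r_i > 0 for i ∈ S_r and c_j > 0 for j ∈ S_c, and let r̃ = r restricted and renormalized on S_r, c̃ = c restricted and renormalized on S_c. Let μ = (Σ_{i∈S_r} r_i)(Σ_{j∈S_c} c_j) > 0. If X̃ ∈ U(r̃, c̃) (viewing r̃, c̃ as supported on S_r, S_c), then the matrix X̂ defined by X̂_{ij} = μ·X̃_{ij} for (i,j) ∈ S_r × S_c and X̂_{ij} = r_i c_j otherwise, satisfies X̂ ∈ U(r, c), i.e., X̂ is nonnegative with row sums r and column sums c. -/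
open Finset Real

theorem stmt_7 {n : ℕ} (r c : Fin n → ℝ)
    (hr0 : ∀ i, 0 ≤ r i) (hr1 : ∑ i, r i = 1)
    (hc0 : ∀ j, 0 ≤ c j) (hc1 : ∑ j, c j = 1)
    (Sr Sc : Finset (Fin n))
    (hrS : ∀ i ∈ Sr, 0 < r i) (hcS : ∀ j ∈ Sc, 0 < c j)
    (rt ct : Fin n → ℝ)
    (hrt : ∀ i, rt i = if i ∈ Sr then r i / (∑ k ∈ Sr, r k) else 0)
    (hct : ∀ j, ct j = if j ∈ Sc then c j / (∑ k ∈ Sc, c k) else 0)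
    (μ : ℝ) (hμ : μ = (∑ i ∈ Sr, r i) * (∑ j ∈ Sc, c j)) (hμpos : 0 < μ)
    (Xt : Matrix (Fin n) (Fin n) ℝ)
    (hXt : (∀ i j, 0 ≤ Xt i j) ∧ (∀ i, ∑ j, Xt i j = rt i) ∧
      (∀ j, ∑ i, Xt i j = ct j))
    (Xh : Matrix (Fin n) (Fin n) ℝ)
    (hXh : ∀ i j, Xh i j = if i ∈ Sr ∧ j ∈ Sc then μ * Xt i j else r i * c j) :
    (∀ i j, 0 ≤ Xh i j) ∧ (∀ i, ∑ j, Xh i j = r i) ∧ (∀ j, ∑ i, Xh i j = c j) := by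
  obtain ⟨hXt0, hXtr, hXtc⟩ := hXt
  set R := ∑ k ∈ Sr, r k with hRdef
  set C := ∑ k ∈ Sc, c k with hCdef
  have hR0 : 0 ≤ R := Finset.sum_nonneg fun i _ => hr0 i
  have hC0 : 0 ≤ C := Finset.sum_nonneg fun j _ => hc0 j
  have hRpos : 0 < R := by
    rcases lt_or_eq_of_le hR0 with h | h
    · exact h
    · exfalso; rw [hμ, ← h, zero_mul] at hμpos; exact lt_irrefl 0 hμpos
  have hCpos : 0 < C := by
    rcases lt_or_eq_of_le hC0 with h | h
    · exact h
    · exfalso; rw [hμ, ← h, mul_zero] at hμpos; exact lt_irrefl 0 hμpos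
  -- Xt vanishes outside Sr rows
  have hrow0 : ∀ i, i ∉ Sr → ∀ j, Xt i j = 0 := by
    intro i hi j
    have hs : ∑ j, Xt i j = 0 := by rw [hXtr i, hrt i, if_neg hi]
    have := (Finset.sum_eq_zero_iff_of_nonneg (fun j _ => hXt0 i j)).mp hs
    exact this j (Finset.mem_univ j)
  have hcol0 : ∀ j, j ∉ Sc → ∀ i, Xt i j = 0 := by
    intro j hj i
    have hs : ∑ i, Xt i j = 0 := by rw [hXtc j, hct j, if_neg hj]
    have := (Finset.sum_eq_zero_iff_of_nonneg (fun i _ => hXt0 i j)).mp hs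
    exact this i (Finset.mem_univ i)
  refine ⟨?_, ?_, ?_⟩
  · intro i j
    rw [hXh]
    split
    · exact mul_nonneg hμpos.le (hXt0 i j)
    · exact mul_nonneg (hr0 i) (hc0 j)
  · intro i
    by_cases hi : i ∈ Sr
    · have hsplit : ∑ j, Xh i j
          = ∑ j ∈ Sc, Xh i j + ∑ j ∈ Scᶜ, Xh i j :=
        (Finset.sum_add_sum_compl Sc _).symm
      have h1 : ∑ j ∈ Sc, Xh i j = μ * ∑ j ∈ Sc, Xt i j := by
        rw [Finset.mul_sum]
        exact Finset.sum_congr rfl fun j hj => by rw [hXh, if_pos ⟨hi, hj⟩]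
      have h2 : ∑ j ∈ Sc, Xt i j = ∑ j, Xt i j := by
        apply Finset.sum_subset (Finset.subset_univ _)
        intro j _ hj
        exact hcol0 j hj i
      have h3 : ∑ j ∈ Scᶜ, Xh i j = r i * ∑ j ∈ Scᶜ, c j := by
        rw [Finset.mul_sum]
        refine Finset.sum_congr rfl fun j hj => ?_
        rw [hXh, if_neg]
        intro h
        exact (Finset.mem_compl.mp hj) h.2
      have h4 : ∑ j ∈ Scᶜ, c j = 1 - C := by
        have := Finset.sum_add_sum_compl Sc c
        rw [hc1] at this
        linarith [this]
      rw [hsplit, h1, h2, hXtr i, hrt i, if_pos hi, h3, h4, hμ]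
      field_simp
      ring
    · have : ∀ j, Xh i j = r i * c j := fun j => by
        rw [hXh, if_neg]; intro h; exact hi h.1
      simp only [this, ← Finset.mul_sum, hc1, mul_one]
  · intro j
    by_cases hj : j ∈ Sc
    · have hsplit : ∑ i, Xh i j
          = ∑ i ∈ Sr, Xh i j + ∑ i ∈ Srᶜ, Xh i j :=
        (Finset.sum_add_sum_compl Sr _).symm
      have h1 : ∑ i ∈ Sr, Xh i j = μ * ∑ i ∈ Sr, Xt i j := by
        rw [Finset.mul_sum]
        exact Finset.sum_congr rfl fun i hi => by rw [hXh, if_pos ⟨hi, hj⟩]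
      have h2 : ∑ i ∈ Sr, Xt i j = ∑ i, Xt i j := by
        apply Finset.sum_subset (Finset.subset_univ _)
        intro i _ hi
        exact hrow0 i hi j
      have h3 : ∑ i ∈ Srᶜ, Xh i j = c j * ∑ i ∈ Srᶜ, r i := by
        rw [Finset.mul_sum]
        refine Finset.sum_congr rfl fun i hi => ?_
        rw [hXh, if_neg, mul_comm]
        intro h
        exact (Finset.mem_compl.mp hi) h.1
      have h4 : ∑ i ∈ Srᶜ, r i = 1 - R := by
        have := Finset.sum_add_sum_compl Sr r
        rw [hr1] at this
        linarith [this]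
      rw [hsplit, h1, h2, hXtc j, hct j, if_pos hj, h3, h4, hμ]
      field_simp
      ring
    · have : ∀ i, Xh i j = r i * c j := fun i => by
        rw [hXh, if_neg]; intro h; exact hj h.2
      simp only [this, ← Finset.sum_mul, hr1, one_mul]
end

section
/- Let A ∈ ℝ^{n×n} be strictly positive with A_{ij} ≤ 1 for all i,j, and r, c ∈ ℝⁿ strictly positive with entries at most 1. Let ν = max_{i,j} 1/A_{ij} and ξ = max_i 1/min(r_i, c_i). Suppose (x*, y*) ∈ ℝⁿ × ℝⁿ satisfies the scaling equations Σ_j A_{ij} e^{x*_i + y*_j} = r_i for all i and Σ_i A_{ij} e^{x*_i + y*_j} = c_j for all j, normalized so that min_i x*_i = 0. Then max_i y*_i ≤ log ν, −max_i y*_i ≤ log(nξ), max_i x*_i ≤ log(n ν ξ), and −min_i y*_i ≤ 2 log(n ν ξ); in particular max(‖x*‖_∞, ‖y*‖_∞) ≤ 2 log(n ν ξ). -/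
open Finset Real

theorem stmt_10 {n : ℕ} (hn : 0 < n) (A : Matrix (Fin n) (Fin n) ℝ)
    (r c : Fin n → ℝ) (ν ξ : ℝ)
    (hA : ∀ i j, 0 < A i j) (hA1 : ∀ i j, A i j ≤ 1)
    (hr : ∀ i, 0 < r i) (hr1 : ∀ i, r i ≤ 1)
    (hc : ∀ j, 0 < c j) (hc1 : ∀ j, c j ≤ 1)
    (hν : ∀ i j, (A i j)⁻¹ ≤ ν) (hνmem : ∃ i j, (A i j)⁻¹ = ν)
    (hξ : ∀ i, (min (r i) (c i))⁻¹ ≤ ξ) (hξmem : ∃ i, (min (r i) (c i))⁻¹ = ξ)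
    (xs ys : Fin n → ℝ)
    (hrow : ∀ i, ∑ j, A i j * Real.exp (xs i + ys j) = r i)
    (hcol : ∀ j, ∑ i, A i j * Real.exp (xs i + ys j) = c j)
    (hnorm : ∀ i, 0 ≤ xs i) (hnorm' : ∃ m, xs m = 0) :
    (∀ j, ys j ≤ Real.log ν) ∧
    (∃ j, Real.log (n * ξ) ≥ -(ys j)) ∧
    (∀ i, xs i ≤ Real.log (n * ν * ξ)) ∧
    (∀ j, -(ys j) ≤ 2 * Real.log (n * ν * ξ)) ∧
    (∀ i, |xs i| ≤ 2 * Real.log (n * ν * ξ)) ∧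
    (∀ j, |ys j| ≤ 2 * Real.log (n * ν * ξ)) := by
  classical
  obtain ⟨m, hm⟩ := hnorm'
  have hn1 : (1:ℝ) ≤ n := by exact_mod_cast hn
  have hν1 : 1 ≤ ν := by
    obtain ⟨i, j, h⟩ := hνmem
    rw [← h]
    exact (one_le_inv₀ (hA i j)).mpr (hA1 i j)
  have hξ1 : 1 ≤ ξ := by
    obtain ⟨i, h⟩ := hξmem
    rw [← h]
    exact (one_le_inv₀ (lt_min (hr i) (hc i))).mpr (min_le_of_left_le (hr1 i))
  have hν0 : 0 < ν := lt_of_lt_of_le one_pos hν1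
  have hξ0 : 0 < ξ := lt_of_lt_of_le one_pos hξ1
  have hnν1 : (1:ℝ) ≤ ↑n * ν := by
    calc (1:ℝ) = 1 * 1 := by ring
      _ ≤ ↑n * ν := mul_le_mul hn1 hν1 zero_le_one (by linarith)
  have hnξ1 : (1:ℝ) ≤ ↑n * ξ := by
    calc (1:ℝ) = 1 * 1 := by ring
      _ ≤ ↑n * ξ := mul_le_mul hn1 hξ1 zero_le_one (by linarith)
  have hP : (1:ℝ) ≤ ↑n * ν * ξ := by
    calc (1:ℝ) = 1 * 1 := by ring
      _ ≤ (↑n * ν) * ξ := mul_le_mul hnν1 hξ1 zero_le_one (by linarith)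
  have hP0 : (0:ℝ) < ↑n * ν * ξ := lt_of_lt_of_le one_pos hP
  have hlogP : 0 ≤ Real.log (↑n * ν * ξ) := Real.log_nonneg hP
  -- 1 ≤ r i * ξ and 1 ≤ c j * ξ
  have hrξ : ∀ i, 1 ≤ r i * ξ := by
    intro i
    have h2 : 0 < min (r i) (c i) := lt_min (hr i) (hc i)
    have h3 := mul_le_mul_of_nonneg_left (hξ i) h2.le
    rw [mul_inv_cancel₀ h2.ne'] at h3
    nlinarith [min_le_left (r i) (c i)]
  have hcξ : ∀ j, 1 ≤ c j * ξ := by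
    intro j
    have h2 : 0 < min (r j) (c j) := lt_min (hr j) (hc j)
    have h3 := mul_le_mul_of_nonneg_left (hξ j) h2.le
    rw [mul_inv_cancel₀ h2.ne'] at h3
    nlinarith [min_le_right (r j) (c j)]
  -- single term bounds
  have hterm_r : ∀ i j, A i j * Real.exp (xs i + ys j) ≤ r i := by
    intro i j
    rw [← hrow i]
    exact Finset.single_le_sum (f := fun k => A i k * Real.exp (xs i + ys k))
      (fun k _ => (mul_pos (hA i k) (Real.exp_pos _)).le) (mem_univ j)
  -- exp (xs i + ys j) ≤ ν for all i j
  have hexpν : ∀ i j, Real.exp (xs i + ys j) ≤ ν := by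
    intro i j
    have h := (hterm_r i j).trans (hr1 i)
    have h2 : 1 ≤ A i j * ν := by
      have := mul_le_mul_of_nonneg_left (hν i j) (hA i j).le
      rwa [mul_inv_cancel₀ (hA i j).ne'] at this
    have h3 : A i j * Real.exp (xs i + ys j) ≤ A i j * ν := le_trans h h2
    exact le_of_mul_le_mul_left h3 (hA i j)
  -- goal 1 : ys j ≤ log ν
  have hys : ∀ j, Real.exp (ys j) ≤ ν := by
    intro j
    have := hexpν m j
    rwa [hm, zero_add] at this
  have goal1 : ∀ j, ys j ≤ Real.log ν := fun j =>
    (Real.le_log_iff_exp_le hν0).mpr (hys j)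
  -- jmax
  haveI : Nonempty (Fin n) := ⟨⟨0, hn⟩⟩
  obtain ⟨J, -, hJ⟩ := Finset.exists_max_image (univ : Finset (Fin n)) ys univ_nonempty
  -- r m ≤ n * exp (ys J)
  have hrm_le : r m ≤ ↑n * Real.exp (ys J) := by
    rw [← hrow m]
    calc ∑ j, A m j * Real.exp (xs m + ys j)
        ≤ ∑ _j : Fin n, Real.exp (ys J) := by
          apply Finset.sum_le_sum
          intro j _
          rw [hm, zero_add]
          calc A m j * Real.exp (ys j) ≤ Real.exp (ys j) :=
                mul_le_of_le_one_left (Real.exp_pos _).le (hA1 m j)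
            _ ≤ Real.exp (ys J) := Real.exp_le_exp.mpr (hJ j (mem_univ j))
      _ = ↑n * Real.exp (ys J) := by
          rw [Finset.sum_const, Finset.card_univ, Fintype.card_fin, nsmul_eq_mul]
  have hkey2 : 1 ≤ (↑n * ξ) * Real.exp (ys J) := by nlinarith [hrξ m, Real.exp_pos (ys J)]
  have hnegJ : Real.exp (-(ys J)) ≤ ↑n * ξ := by
    have h := mul_le_mul_of_nonneg_left hkey2 (Real.exp_pos (-(ys J))).le
    rw [mul_one, show Real.exp (-(ys J)) * (↑n * ξ * Real.exp (ys J))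
        = ↑n * ξ * (Real.exp (-(ys J)) * Real.exp (ys J)) by ring,
      ← Real.exp_add, neg_add_cancel, Real.exp_zero, mul_one] at h
    exact h
  have goal2 : Real.log (↑n * ξ) ≥ -(ys J) :=
    (Real.le_log_iff_exp_le (by positivity)).mpr hnegJ
  -- goal 3 : xs i ≤ log (n ν ξ)
  have hxs_exp : ∀ i, Real.exp (xs i) ≤ ↑n * ν * ξ := by
    intro i
    have h1 := hexpν i J
    have h : Real.exp (xs i) = Real.exp (xs i + ys J) * Real.exp (-(ys J)) := by
      rw [← Real.exp_add]; ring_nf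
    rw [h]
    calc Real.exp (xs i + ys J) * Real.exp (-(ys J)) ≤ ν * (↑n * ξ) :=
          mul_le_mul h1 hnegJ (Real.exp_pos _).le hν0.le
      _ = ↑n * ν * ξ := by ring
  have goal3 : ∀ i, xs i ≤ Real.log (↑n * ν * ξ) := fun i =>
    (Real.le_log_iff_exp_le hP0).mpr (hxs_exp i)
  -- goal 4 : -(ys j) ≤ 2 log (n ν ξ)
  have goal4 : ∀ j, -(ys j) ≤ 2 * Real.log (↑n * ν * ξ) := by
    intro j
    have hcle : c j ≤ ↑n * ((↑n * ν * ξ) * Real.exp (ys j)) := by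
      rw [← hcol j]
      calc ∑ i, A i j * Real.exp (xs i + ys j)
          ≤ ∑ _i : Fin n, (↑n * ν * ξ) * Real.exp (ys j) := by
            apply Finset.sum_le_sum
            intro i _
            rw [Real.exp_add]
            calc A i j * (Real.exp (xs i) * Real.exp (ys j))
                ≤ Real.exp (xs i) * Real.exp (ys j) :=
                  mul_le_of_le_one_left (by positivity) (hA1 i j)
              _ ≤ (↑n * ν * ξ) * Real.exp (ys j) :=
                  mul_le_mul_of_nonneg_right (hxs_exp i) (Real.exp_pos _).le
        _ = ↑n * ((↑n * ν * ξ) * Real.exp (ys j)) := by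
            rw [Finset.sum_const, Finset.card_univ, Fintype.card_fin, nsmul_eq_mul]
    have hkey : 1 ≤ (↑n * ν * ξ)^2 * Real.exp (ys j) := by
      have hfac : 0 ≤ ↑n * ↑n * ν * ξ * ξ * Real.exp (ys j) := by positivity
      nlinarith [mul_le_mul_of_nonneg_right hcle hξ0.le, hcξ j,
        mul_le_mul_of_nonneg_left hν1 hfac]
    have hneg : Real.exp (-(ys j)) ≤ (↑n * ν * ξ)^2 := by
      have h := mul_le_mul_of_nonneg_left hkey (Real.exp_pos (-(ys j))).le
      rw [mul_one, show Real.exp (-(ys j)) * ((↑n * ν * ξ)^2 * Real.exp (ys j))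
          = (↑n * ν * ξ)^2 * (Real.exp (-(ys j)) * Real.exp (ys j)) by ring,
        ← Real.exp_add, neg_add_cancel, Real.exp_zero, mul_one] at h
      exact h
    have := (Real.le_log_iff_exp_le (by positivity)).mpr hneg
    rwa [Real.log_pow, Nat.cast_ofNat] at this
  refine ⟨goal1, ⟨J, goal2⟩, goal3, goal4, ?_, ?_⟩
  · intro i
    rw [abs_of_nonneg (hnorm i)]
    linarith [goal3 i]
  · intro j
    rw [abs_le]
    constructor
    · linarith [goal4 j]
    · have hlog : Real.log ν ≤ Real.log (↑n * ν * ξ) :=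
        Real.log_le_log hν0 (by nlinarith [mul_le_mul_of_nonneg_left hnξ1 hν0.le])
      linarith [goal1 j]
end

section
/- Let G = (L ∪ R, E) be a bipartite graph with |L| = |R| = n and E ⊆ L × R. Define the cost matrix C ∈ {0,1}^{n×n} by C_{ij} = 0 if (i,j) ∈ E and C_{ij} = 1 otherwise, and let r = c = (1/n)𝟙. Let OPT_T = min_{X ∈ U(r,c)} ⟨C, X⟩ and let OPT_M be the maximum cardinality of a matching in G. Then OPT_T ≤ 1 − OPT_M/n. -/
open Finset Real

lemma exists_perm_ext {n : ℕ} (F : Finset (Fin n × Fin n))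
    (hM : ∀ e ∈ F, ∀ e' ∈ F, e ≠ e' → e.1 ≠ e'.1 ∧ e.2 ≠ e'.2) :
    ∃ σ : Equiv.Perm (Fin n), ∀ e ∈ F, σ e.1 = e.2 := by
  classical
  set S := F.image Prod.fst with hS
  set T := F.image Prod.snd with hT
  have hcardS : S.card = F.card := by
    apply Finset.card_image_of_injOn
    intro e he e' he' h
    by_contra hne
    exact (hM e he e' he' hne).1 h
  have hcardT : T.card = F.card := by
    apply Finset.card_image_of_injOn
    intro e he e' he' h
    by_contra hne
    exact (hM e he e' he' hne).2 h
  have hcompl : Sᶜ.card = Tᶜ.card := by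
    simp [Finset.card_compl, hcardS, hcardT]
  let eqv : (Sᶜ : Finset (Fin n)) ≃ (Tᶜ : Finset (Fin n)) := Finset.equivOfCardEq hcompl
  have hex : ∀ i ∈ S, ∃! e, e ∈ F ∧ e.1 = i := by
    intro i h
    obtain ⟨e, he, hei⟩ := Finset.mem_image.mp h
    refine ⟨e, ⟨he, hei⟩, ?_⟩
    rintro e' ⟨he', hp'⟩
    by_contra hne
    exact ((hM e' he' e he (hne)).1 (hp'.trans hei.symm))
  let φ : Fin n → Fin n := fun i =>
    if h : i ∈ S then (Finset.choose (fun e => e.1 = i) F (hex i h)).2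
    else (eqv ⟨i, Finset.mem_compl.mpr h⟩ : Fin n)
  have hφF : ∀ e ∈ F, φ e.1 = e.2 := by
    intro e he
    have hmem : e.1 ∈ S := Finset.mem_image_of_mem _ he
    have hch := Finset.choose_spec (fun e' => e'.1 = e.1) F (hex e.1 hmem)
    have heq : Finset.choose (fun e' => e'.1 = e.1) F (hex e.1 hmem) = e := by
      by_contra hne
      exact (hM _ hch.1 e he hne).1 hch.2
    simp only [φ, dif_pos hmem, heq]
  have hφT : ∀ i ∈ S, φ i ∈ T := by
    intro i hi
    simp only [φ, dif_pos hi]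
    have hch := Finset.choose_spec (fun e' => e'.1 = i) F (hex i hi)
    exact Finset.mem_image_of_mem _ hch.1
  have hinj : Function.Injective φ := by
    intro i₁ i₂ h
    by_cases h1 : i₁ ∈ S <;> by_cases h2 : i₂ ∈ S
    · -- both in S
      have hch1 := Finset.choose_spec (fun e' => e'.1 = i₁) F (hex i₁ h1)
      have hch2 := Finset.choose_spec (fun e' => e'.1 = i₂) F (hex i₂ h2)
      simp only [φ, dif_pos h1, dif_pos h2] at h
      have : Finset.choose (fun e' => e'.1 = i₁) F (hex i₁ h1) = Finset.choose (fun e' => e'.1 = i₂) F (hex i₂ h2) := by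
        by_contra hne
        exact (hM _ hch1.1 _ hch2.1 hne).2 h
      rw [← hch1.2, ← hch2.2, this]
    · have t1 := hφT i₁ h1
      have t2 : φ i₂ ∈ Tᶜ := by
        simp only [φ, dif_neg h2]; exact (eqv ⟨i₂, Finset.mem_compl.mpr h2⟩).2
      rw [h] at t1; exact absurd t1 (Finset.mem_compl.mp t2)
    · have t1 : φ i₁ ∈ Tᶜ := by
        simp only [φ, dif_neg h1]; exact (eqv ⟨i₁, Finset.mem_compl.mpr h1⟩).2
      have t2 := hφT i₂ h2
      rw [← h] at t2; exact absurd t2 (Finset.mem_compl.mp t1)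
    · simp only [φ, dif_neg h1, dif_neg h2] at h
      have := eqv.injective (Subtype.ext h)
      exact Subtype.ext_iff.mp this
  exact ⟨Equiv.ofBijective φ (Finite.injective_iff_bijective.mp hinj), fun e he => hφF e he⟩

theorem stmt_12 {n : ℕ} (hn : 0 < n) (E : Finset (Fin n × Fin n))
    (C : Matrix (Fin n) (Fin n) ℝ)
    (hC : ∀ i j, C i j = if (i, j) ∈ E then 0 else 1)
    (OPT_T OPT_M : ℝ)
    (hOT : (∃ X : Matrix (Fin n) (Fin n) ℝ,
        ((∀ i j, 0 ≤ X i j) ∧ (∀ i, ∑ j, X i j = 1 / n) ∧ (∀ j, ∑ i, X i j = 1 / n)) ∧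
        OPT_T = ∑ i, ∑ j, C i j * X i j) ∧
      (∀ X : Matrix (Fin n) (Fin n) ℝ,
        (∀ i j, 0 ≤ X i j) → (∀ i, ∑ j, X i j = 1 / n) → (∀ j, ∑ i, X i j = 1 / n) →
        OPT_T ≤ ∑ i, ∑ j, C i j * X i j))
    (hOM : (∃ F : Finset (Fin n × Fin n), F ⊆ E ∧
        (∀ e ∈ F, ∀ e' ∈ F, e ≠ e' → e.1 ≠ e'.1 ∧ e.2 ≠ e'.2) ∧
        (F.card : ℝ) = OPT_M) ∧
      (∀ F : Finset (Fin n × Fin n), F ⊆ E →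
        (∀ e ∈ F, ∀ e' ∈ F, e ≠ e' → e.1 ≠ e'.1 ∧ e.2 ≠ e'.2) →
        (F.card : ℝ) ≤ OPT_M)) :
    OPT_T ≤ 1 - OPT_M / n := by
  classical
  obtain ⟨⟨F, hFE, hFM, hFcard⟩, _⟩ := hOM
  obtain ⟨σ, hσ⟩ := exists_perm_ext F hFM
  have hnR : (0:ℝ) < n := by exact_mod_cast hn
  set X : Matrix (Fin n) (Fin n) ℝ := fun i j => if j = σ i then 1 / n else 0 with hX
  have hpos : ∀ i j, 0 ≤ X i j := by
    intro i j; simp only [hX]; positivity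
  have hrow : ∀ i, ∑ j, X i j = 1 / n := by
    intro i; simp [hX]
  have hcol : ∀ j, ∑ i, X i j = 1 / n := by
    intro j
    simp only [hX]
    rw [Finset.sum_eq_single (σ.symm j)]
    · simp
    · intro i _ hi
      rw [if_neg]
      intro hc
      exact hi (by rw [hc]; simp)
    · simp
  have hle := hOT.2 X hpos hrow hcol
  have hval : ∑ i, ∑ j, C i j * X i j ≤ 1 - OPT_M / n := by
    have hsum : ∀ i, ∑ j, C i j * X i j = C i (σ i) * (1/n) := by
      intro i
      simp only [hX]
      rw [Finset.sum_eq_single (σ i)]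
      · simp
      · intro j _ hj; simp [hj]
      · simp
    rw [Finset.sum_congr rfl (fun i _ => hsum i)]
    have hCle : ∑ i, C i (σ i) ≤ (n : ℝ) - F.card := by
      have hS : ∀ i ∈ F.image Prod.fst, C i (σ i) = 0 := by
        intro i hi
        obtain ⟨e, he, hei⟩ := Finset.mem_image.mp hi
        have : σ i = e.2 := by rw [← hei]; exact hσ e he
        rw [hC, if_pos]
        rw [this, ← hei]
        exact hFE he
      have hcardS : (F.image Prod.fst).card = F.card := by
        apply Finset.card_image_of_injOn
        intro e he e' he' h
        by_contra hne
        exact (hFM e he e' he' hne).1 h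
      calc ∑ i, C i (σ i) = ∑ i ∈ (F.image Prod.fst)ᶜ, C i (σ i) := by
            rw [← Finset.sum_compl_add_sum (F.image Prod.fst)]
            rw [Finset.sum_eq_zero hS]; ring
        _ ≤ ∑ i ∈ (F.image Prod.fst)ᶜ, 1 := by
            apply Finset.sum_le_sum
            intro i _
            rw [hC]; split <;> norm_num
        _ = (n : ℝ) - F.card := by
            have hFle : F.card ≤ n := by
              rw [← hcardS]
              simpa using Finset.card_le_univ (F.image Prod.fst)
            rw [Finset.sum_const, Finset.card_compl, hcardS]
            simp [nsmul_eq_mul, Nat.cast_sub hFle]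
    calc ∑ i, C i (σ i) * (1/n) = (∑ i, C i (σ i)) * (1/n) := by rw [← Finset.sum_mul]
      _ ≤ ((n:ℝ) - F.card) * (1/n) := by
          apply mul_le_mul_of_nonneg_right hCle; positivity
      _ = 1 - OPT_M / n := by
          rw [← hFcard]; field_simp
  linarith
end

section
/- Let C be a nonnegative n×n cost matrix, r, c ∈ Δⁿ, and η > 0. Let X_η minimize the entropy-regularized objective ⟨C, X⟩ − η H(X) over U(r,c), and let X* minimize ⟨C, X⟩ over U(r,c). Then ⟨C, X_η⟩ ≤ ⟨C, X*⟩ + 2η log n (for n ≥ 1), using that H(X) ∈ [1, 1 + 2 log n] for all X ∈ Δ^{n×n}. -/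
/-!
Writing `H(X) = ∑ -X log X + ∑ X`, both plans have total mass one, so the entropy gap
`H(X_η) - H(X*)` is at most `∑ -X_η log X_η ≤ log n² = 2 log n` (Jensen for the concave
`-x log x`), the other term `∑ -X* log X*` being nonnegative since all entries lie in `[0, 1]`.
Optimality of `X_η` against `X*` then gives the bound.
-/

open Finset Real

namespace Real

variable {ι : Type*} [Fintype ι] {p : ι → ℝ}

lemma sum_negMulLog_le_log_card (h0 : ∀ i, 0 ≤ p i) (h1 : ∑ i, p i = 1) :
    ∑ i, negMulLog (p i) ≤ log (Fintype.card ι) := by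
  have : Nonempty ι := by
    by_contra h
    simp_all
  have hN : (0 : ℝ) < Fintype.card ι := by exact_mod_cast Fintype.card_pos
  have jensen := concaveOn_negMulLog.le_map_sum (t := univ)
    (w := fun _ => (Fintype.card ι : ℝ)⁻¹) (p := p) (fun _ _ => by positivity)
    (by simp [hN.ne']) (fun i _ => Set.mem_Ici.2 (h0 i))
  simp only [smul_eq_mul, ← mul_sum, h1, mul_one, negMulLog, log_inv, neg_mul_neg] at jensen
  exact le_of_mul_le_mul_left jensen (inv_pos.2 hN)

lemma sum_negMulLog_nonneg (h0 : ∀ i, 0 ≤ p i) (h1 : ∑ i, p i ≤ 1) :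
    0 ≤ ∑ i, negMulLog (p i) :=
  sum_nonneg fun i _ =>
    negMulLog_nonneg (h0 i) ((single_le_sum (fun j _ => h0 j) (mem_univ i)).trans h1)

lemma neg_sum_mul_log_sub_one (p : ι → ℝ) :
    -∑ i, p i * (log (p i) - 1) = ∑ i, negMulLog (p i) + ∑ i, p i := by
  rw [← sum_add_distrib, ← sum_neg_distrib]
  congr 1 with i
  rw [negMulLog]
  ring

end Real

theorem cost_le_add_mul_log_card_of_entropic_le {ι : Type*} [Fintype ι] {C p q : ι → ℝ} {η : ℝ}
    (hη : 0 ≤ η) (hp0 : ∀ i, 0 ≤ p i) (hp1 : ∑ i, p i = 1)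
    (hq0 : ∀ i, 0 ≤ q i) (hq1 : ∑ i, q i = 1)
    (hopt : ∑ i, C i * p i - η * (-∑ i, p i * (log (p i) - 1)) ≤
      ∑ i, C i * q i - η * (-∑ i, q i * (log (q i) - 1))) :
    ∑ i, C i * p i ≤ ∑ i, C i * q i + η * log (Fintype.card ι) := by
  rw [neg_sum_mul_log_sub_one, neg_sum_mul_log_sub_one, hp1, hq1] at hopt
  have hp := sum_negMulLog_le_log_card hp0 hp1
  have hq := sum_negMulLog_nonneg hq0 hq1.le
  nlinarith

theorem stmt_17_general {n : ℕ} (C : Matrix (Fin n) (Fin n) ℝ)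
    (r c : Fin n → ℝ) (η : ℝ) (hη : 0 < η)
    (hr1 : ∑ i, r i = 1)
    (Xη Xstar : Matrix (Fin n) (Fin n) ℝ)
    (hXη : (∀ i j, 0 ≤ Xη i j) ∧ (∀ i, ∑ j, Xη i j = r i) ∧ (∀ j, ∑ i, Xη i j = c j))
    (hXs : (∀ i j, 0 ≤ Xstar i j) ∧ (∀ i, ∑ j, Xstar i j = r i) ∧
      (∀ j, ∑ i, Xstar i j = c j))
    (hXηopt : ∀ X : Matrix (Fin n) (Fin n) ℝ,
      (∀ i j, 0 ≤ X i j) → (∀ i, ∑ j, X i j = r i) → (∀ j, ∑ i, X i j = c j) →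
      (∑ i, ∑ j, C i j * Xη i j) - η * (-∑ i, ∑ j, Xη i j * (Real.log (Xη i j) - 1)) ≤
      (∑ i, ∑ j, C i j * X i j) - η * (-∑ i, ∑ j, X i j * (Real.log (X i j) - 1))) :
    (∑ i, ∑ j, C i j * Xη i j) ≤ (∑ i, ∑ j, C i j * Xstar i j) + 2 * η * Real.log n := by
  obtain ⟨hXη0, hXηr, -⟩ := hXη
  obtain ⟨hXs0, hXsr, hXsc⟩ := hXs
  have mass_eq_one {X : Matrix (Fin n) (Fin n) ℝ} (hX : ∀ i, ∑ j, X i j = r i) :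
      ∑ x : Fin n × Fin n, X x.1 x.2 = 1 := by
    rw [Fintype.sum_prod_type]
    simp only [hX, hr1]
  have key := cost_le_add_mul_log_card_of_entropic_le (ι := Fin n × Fin n)
    (C := fun x => C x.1 x.2)
    (p := fun x => Xη x.1 x.2) (q := fun x => Xstar x.1 x.2) hη.le
    (fun x => hXη0 x.1 x.2) (mass_eq_one hXηr) (fun x => hXs0 x.1 x.2) (mass_eq_one hXsr)
    (by simpa only [Fintype.sum_prod_type] using hXηopt Xstar hXs0 hXsr hXsc)
  rw [Fintype.card_prod, Fintype.card_fin, Nat.cast_mul, ← sq, log_pow, Nat.cast_ofNat,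
    ← mul_assoc, mul_comm η] at key
  simpa only [Fintype.sum_prod_type] using key

theorem stmt_17 {n : ℕ} (hn : 1 ≤ n) (C : Matrix (Fin n) (Fin n) ℝ)
    (r c : Fin n → ℝ) (η : ℝ) (hη : 0 < η)
    (hC : ∀ i j, 0 ≤ C i j)
    (hr0 : ∀ i, 0 ≤ r i) (hr1 : ∑ i, r i = 1)
    (hc0 : ∀ j, 0 ≤ c j) (hc1 : ∑ j, c j = 1)
    (Xη Xstar : Matrix (Fin n) (Fin n) ℝ)
    (hXη : (∀ i j, 0 ≤ Xη i j) ∧ (∀ i, ∑ j, Xη i j = r i) ∧ (∀ j, ∑ i, Xη i j = c j))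
    (hXs : (∀ i j, 0 ≤ Xstar i j) ∧ (∀ i, ∑ j, Xstar i j = r i) ∧
      (∀ j, ∑ i, Xstar i j = c j))
    (hXηopt : ∀ X : Matrix (Fin n) (Fin n) ℝ,
      (∀ i j, 0 ≤ X i j) → (∀ i, ∑ j, X i j = r i) → (∀ j, ∑ i, X i j = c j) →
      (∑ i, ∑ j, C i j * Xη i j) - η * (-∑ i, ∑ j, Xη i j * (Real.log (Xη i j) - 1)) ≤
      (∑ i, ∑ j, C i j * X i j) - η * (-∑ i, ∑ j, X i j * (Real.log (X i j) - 1)))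
    (hXsopt : ∀ X : Matrix (Fin n) (Fin n) ℝ,
      (∀ i j, 0 ≤ X i j) → (∀ i, ∑ j, X i j = r i) → (∀ j, ∑ i, X i j = c j) →
      (∑ i, ∑ j, C i j * Xstar i j) ≤ ∑ i, ∑ j, C i j * X i j) :
    (∑ i, ∑ j, C i j * Xη i j) ≤ (∑ i, ∑ j, C i j * Xstar i j) + 2 * η * Real.log n :=
  stmt_17_general C r c η hη hr1 Xη Xstar hXη hXs hXηopt
end
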